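/- (El-Sahili–Kouider) Every digraph whose underlying graph has chromatic number at least k + l + 2 contains a path with two blocks P(k, l). -/

import Mathlib

/-!
Let `E` be a maximal acyclic subdigraph of `D` and let the level of a vertex be the length of a
longest `E`-path ending at it. By maximality every arc of `D` joins vertices of different levels,
and every vertex of level `n` is the head of a directed path of `D` climbing through the levels
`0, …, n`. Colour the levels below `l` by themselves and the others cyclically modulo `k + 1`.
The ends of a monochromatic arc `x → y` are then at least `k + 1` levels apart, so the climbing
paths ending at `y` and at `x` run through disjoint level windows and, joined by the arc, form
`P(k, l)` or `P(l, k)`. Hence a digraph containing neither is `(k + l + 1)`-colourable.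
-/

/-- The underlying simple graph of a digraph given as a relation. -/
def underlyingGraph {V : Type*} (D : V → V → Prop) : SimpleGraph V where
  Adj a b := a ≠ b ∧ (D a b ∨ D b a)
  symm := ⟨fun _ _ h => ⟨h.1.symm, h.2.symm⟩⟩
  loopless := ⟨fun _ h => h.1 rfl⟩

/-- `D` contains a path with two blocks `P(k,l)`: `k` forward arcs followed by
`l` backward arcs. -/
def HasTwoBlockPath {V : Type*} (D : V → V → Prop) (k l : ℕ) : Prop :=
  ∃ f : Fin (k + l + 1) → V, Function.Injective f ∧
    (∀ i j : Fin (k + l + 1), (j : ℕ) = (i : ℕ) + 1 → (i : ℕ) < k → D (f i) (f j)) ∧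
    (∀ i j : Fin (k + l + 1), (j : ℕ) = (i : ℕ) + 1 → k ≤ (i : ℕ) → D (f j) (f i))

section

open Relation

variable {V : Type*}

theorem HasTwoBlockPath.symm {D : V → V → Prop} {k l : ℕ} (h : HasTwoBlockPath D k l) :
    HasTwoBlockPath D l k := by
  obtain ⟨f, hinj, hfwd, hbwd⟩ := h
  have hkl : l + k + 1 = k + l + 1 := by omega
  refine ⟨fun i => f (Fin.cast hkl i.rev),
    hinj.comp ((Fin.cast_injective hkl).comp Fin.rev_injective), fun i j hj hi => ?_,
    fun i j hj hi => ?_⟩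
  · exact hbwd _ _ (by simp only [Fin.val_cast, Fin.val_rev]; omega)
      (by simp only [Fin.val_cast, Fin.val_rev]; omega)
  · exact hfwd _ _ (by simp only [Fin.val_cast, Fin.val_rev]; omega)
      (by simp only [Fin.val_cast, Fin.val_rev]; omega)

theorem Relation.TransGen.cases_of_add_arc {r : V → V → Prop} {a b x y : V}
    (h : TransGen (fun x y => r x y ∨ x = a ∧ y = b) x y) :
    TransGen r x y ∨ ReflTransGen r x a ∧ ReflTransGen r b y := by
  induction h with
  | single hxy =>
    rcases hxy with hxy | ⟨rfl, rfl⟩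
    · exact .inl (.single hxy)
    · exact .inr ⟨.refl, .refl⟩
  | tail _ hyz ih =>
    rcases hyz with hyz | ⟨rfl, rfl⟩
    · exact ih.imp (·.tail hyz) fun ⟨hxa, hby⟩ => ⟨hxa, hby.tail hyz⟩
    · exact .inr ⟨ih.elim (·.to_reflTransGen) (·.1), .refl⟩

theorem exists_maximal_acyclic_le [Finite V] (D : V → V → Prop) :
    ∃ E ≤ D, (∀ a, ¬ TransGen E a a) ∧
      ∀ ⦃u v⦄, u ≠ v → D u v → TransGen E u v ∨ TransGen E v u := by
  let S : Set (V → V → Prop) := {E | E ≤ D ∧ ∀ a, ¬ TransGen E a a}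
  obtain ⟨E, ⟨hED, hE⟩, hmax⟩ := S.toFinite.exists_maximal
    ⟨⊥, bot_le, fun a h => by simpa using TransGen.head'_iff.mp h⟩
  refine ⟨E, hED, hE, fun u v huv hD => ?_⟩
  by_contra! hno
  have hE' : (fun x y => E x y ∨ x = u ∧ y = v) ∈ S := by
    refine ⟨fun x y hxy => hxy.elim (hED x y) ?_, fun x hx => ?_⟩
    · rintro ⟨rfl, rfl⟩
      exact hD
    · rcases hx.cases_of_add_arc with hx | ⟨hxu, hvx⟩
      · exact hE x hx
      · rcases reflTransGen_iff_eq_or_transGen.mp (hvx.trans hxu) with rfl | hvu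
        · exact huv rfl
        · exact hno.2 hvu
  exact hno.1 (.single (hmax hE' (fun x y => Or.inl) u v (Or.inr ⟨rfl, rfl⟩)))

theorem exists_height_of_acyclic [Finite V] {E : V → V → Prop} (hE : ∀ a, ¬ TransGen E a a) :
    ∃ h : V → ℕ, (∀ ⦃u v⦄, TransGen E u v → h u < h v) ∧
      ∀ v, 0 < h v → ∃ u, E u v ∧ h u + 1 = h v := by
  classical
  have := Fintype.ofFinite V
  have : IsTrans V (TransGen E) := ⟨fun _ _ _ => TransGen.trans⟩
  have : Std.Irrefl (TransGen E) := ⟨hE⟩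
  have hwf : WellFounded E :=
    Subrelation.wf TransGen.single (Finite.wellFounded_of_trans_of_irrefl _)
  let h : V → ℕ := hwf.fix fun v ih => Finset.univ.sup fun u : {u // E u v} => ih u u.2 + 1
  have h_eq (v : V) : h v = Finset.univ.sup fun u : {u // E u v} => h u + 1 := hwf.fix_eq _ v
  have h_lt ⦃u v : V⦄ (huv : E u v) : h u < h v := by
    rw [h_eq v]
    exact Finset.le_sup (f := fun u : {u // E u v} => h u + 1) (Finset.mem_univ ⟨u, huv⟩)
  refine ⟨h, fun u v huv => ?_, fun v hv => ?_⟩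
  · induction huv with
    | single huv => exact h_lt huv
    | tail _ hvw ih => exact ih.trans (h_lt hvw)
  · have : Nonempty {u // E u v} := by
      by_contra! hempty
      simp [h_eq v] at hv
    obtain ⟨⟨u, huv⟩, -, hu⟩ :=
      Finset.exists_mem_eq_sup Finset.univ Finset.univ_nonempty fun u : {u // E u v} => h u + 1
    exact ⟨u, huv, by rw [h_eq v, hu]⟩

structure Leveling (D : V → V → Prop) where
  level : V → ℕ
  pred : V → V
  level_ne : ∀ ⦃u v⦄, u ≠ v → D u v → level u ≠ level v
  pred_arc : ∀ v, 0 < level v → D (pred v) v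
  level_pred : ∀ v, 0 < level v → level (pred v) + 1 = level v

namespace Leveling

theorem nonempty [Finite V] (D : V → V → Prop) : Nonempty (Leveling D) := by
  classical
  obtain ⟨E, hED, hE, hconn⟩ := exists_maximal_acyclic_le D
  obtain ⟨h, h_lt, h_pred⟩ := exists_height_of_acyclic hE
  let p v := if hv : 0 < h v then (h_pred v hv).choose else v
  have hp (v : V) (hv : 0 < h v) : E (p v) v ∧ h (p v) + 1 = h v := by
    simpa only [p, dif_pos hv] using (h_pred v hv).choose_spec
  refine ⟨h, p, fun u v huv hD => ?_, fun v hv => hED _ _ (hp v hv).1, fun v hv => (hp v hv).2⟩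
  rcases hconn huv hD with huv | hvu
  · exact (h_lt huv).ne
  · exact (h_lt hvu).ne'

variable {D : V → V → Prop} (L : Leveling D)

theorem level_iterate_pred (v : V) {j : ℕ} (hj : j ≤ L.level v) :
    L.level (L.pred^[j] v) + j = L.level v := by
  induction j with
  | zero => rfl
  | succ j ih =>
    have := ih (by omega)
    have := L.level_pred (L.pred^[j] v) (by omega)
    rw [Function.iterate_succ_apply']
    omega

theorem arc_iterate_pred (v : V) {j : ℕ} (hj : j < L.level v) :
    D (L.pred^[j + 1] v) (L.pred^[j] v) := by
  have := L.level_iterate_pred v hj.le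
  rw [Function.iterate_succ_apply']
  exact L.pred_arc _ (by omega)

/-- The path `pred^[a] v → ⋯ → pred v → v ← u ← pred u ← ⋯ ← pred^[b - 1] u`; its two halves
lie in disjoint level windows, which makes it injective. -/
theorem hasTwoBlockPath_of_arc {u v : V} {a b : ℕ} (huv : D u v) (ha : a ≤ L.level v)
    (hb : b ≤ L.level u + 1)
    (hdisj : L.level v + b ≤ L.level u ∨ L.level u + a < L.level v) :
    HasTwoBlockPath D a b := by
  let f (i : Fin (a + b + 1)) : V :=
    if (i : ℕ) ≤ a then L.pred^[a - i] v else L.pred^[i - a - 1] u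
  have level_f (i : Fin (a + b + 1)) : L.level (f i) =
      if (i : ℕ) ≤ a then L.level v - (a - i) else L.level u - (i - a - 1) := by
    have := i.isLt
    by_cases hi : (i : ℕ) ≤ a
    · have := L.level_iterate_pred v (j := a - i) (by omega)
      simp only [f, if_pos hi]
      omega
    · have := L.level_iterate_pred u (j := i - a - 1) (by omega)
      simp only [f, if_neg hi]
      omega
  refine ⟨f, fun i j hij => ?_, fun i j hj hi => ?_, fun i j hj hi => ?_⟩
  · have hlevel := congrArg L.level hij
    rw [level_f, level_f] at hlevel
    have := i.isLt
    have := j.isLt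
    ext
    split_ifs at hlevel <;> omega
  · have hsucc : a - i = a - j + 1 := by omega
    simp only [f, if_pos hi.le, if_pos (show (j : ℕ) ≤ a by omega), hsucc]
    exact L.arc_iterate_pred v (by omega)
  · have := j.isLt
    rcases hi.eq_or_lt with hi | hi
    · simp only [f, if_pos hi.ge, if_neg (show ¬(j : ℕ) ≤ a by omega),
        show a - i = 0 by omega, show (j : ℕ) - a - 1 = 0 by omega]
      exact huv
    · have hsucc : (j : ℕ) - a - 1 = i - a - 1 + 1 := by omega
      simp only [f, if_neg (show ¬(i : ℕ) ≤ a by omega), if_neg (show ¬(j : ℕ) ≤ a by omega), hsucc]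
      exact L.arc_iterate_pred u (by omega)

end Leveling

def levelColor (k l n : ℕ) : Fin (k + l + 1) :=
  if h : n < l then ⟨n, by omega⟩
  else ⟨l + (n - l) % (k + 1), by have := Nat.mod_lt (n - l) (show 0 < k + 1 by omega); omega⟩

theorem le_and_add_le_of_levelColor_eq {k l m n : ℕ} (hmn : m < n)
    (h : levelColor k l m = levelColor k l n) : l ≤ m ∧ m + (k + 1) ≤ n := by
  unfold levelColor at h
  split_ifs at h <;> simp only [Fin.mk.injEq] at h
  · omega
  · omega
  · omega
  · have hdvd : k + 1 ∣ (n - l) - (m - l) :=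
      (Nat.modEq_iff_dvd' (by omega)).mp (by omega : (m - l) % (k + 1) = (n - l) % (k + 1))
    have := Nat.le_of_dvd (by omega) hdvd
    omega

theorem colorable_of_not_hasTwoBlockPath [Finite V] {D : V → V → Prop} {k l : ℕ}
    (hkl : ¬ HasTwoBlockPath D k l) (hlk : ¬ HasTwoBlockPath D l k) :
    (underlyingGraph D).Colorable (k + l + 1) := by
  obtain ⟨L⟩ := Leveling.nonempty D
  suffices h : ∀ ⦃x y⦄, x ≠ y → D x y → levelColor k l (L.level x) ≠ levelColor k l (L.level y) from
    ⟨.mk (fun v => levelColor k l (L.level v)) fun {x y} ⟨hxy, hD⟩ =>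
      hD.elim (h hxy) fun hD => (h hxy.symm hD).symm⟩
  intro x y hxy hD hcol
  rcases (L.level_ne hxy hD).lt_or_gt with hlt | hlt
  · obtain ⟨hl, hgap⟩ := le_and_add_le_of_levelColor_eq hlt hcol
    exact hkl (L.hasTwoBlockPath_of_arc hD (by omega) (by omega) (by omega))
  · obtain ⟨hl, hgap⟩ := le_and_add_le_of_levelColor_eq hlt hcol.symm
    exact hlk (L.hasTwoBlockPath_of_arc hD (by omega) (by omega) (by omega))

end

theorem stmt_14_general {V : Type*} [Fintype V] (D : V → V → Prop) (k l : ℕ)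
    (hchrom : ((k + l + 2 : ℕ) : ℕ∞) ≤ (underlyingGraph D).chromaticNumber) :
    HasTwoBlockPath D k l := by
  by_contra hkl
  have hcol := colorable_of_not_hasTwoBlockPath hkl fun hlk => hkl hlk.symm
  have := hchrom.trans hcol.chromaticNumber_le
  norm_cast at this
  omega

/-- El-Sahili–Kouider. -/
theorem stmt_14 {V : Type*} [Fintype V] (D : V → V → Prop)
    (hasym : ∀ a b, D a b → ¬ D b a) (k l : ℕ)
    (hchrom : ((k + l + 2 : ℕ) : ℕ∞) ≤ (underlyingGraph D).chromaticNumber) :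
    HasTwoBlockPath D k l :=
  stmt_14_general D k l hchrom
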